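/- arXiv:1804.01311 — 2 statements merged into one kernel-verified Lean document; each statement's English description precedes it below -/
import Mathlib

section
/- Let p be a polynomial on ℝ^d homogeneous of degree m, f₀ ∈ C^∞((0,∞)), and f(x) = f₀(‖x‖). Then the constant-coefficient differential operator p(∂) = p(∂₁,…,∂_d) applied to f satisfies p(∂)f(x) = Σ_{j=0}^{⌊m/2⌋} (1/(2^j j!)) · [((1/r) d/dr)^{m-j} f₀](‖x‖) · (Δ^j p)(x), where Δ is the Euclidean Laplacian. -/
open Finset MvPolynomial Real

noncomputable section

/-- Partial derivative in direction `l` on Euclidean space. -/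
def pd (d : ℕ) (l : Fin d) (f : EuclideanSpace ℝ (Fin d) → ℝ) :
    EuclideanSpace ℝ (Fin d) → ℝ :=
  fun x => fderiv ℝ f x (EuclideanSpace.single l 1)

/-- Iterated partial derivative for a multi-index `s`. -/
def Dmulti (d : ℕ) (s : Fin d →₀ ℕ) (f : EuclideanSpace ℝ (Fin d) → ℝ) :
    EuclideanSpace ℝ (Fin d) → ℝ :=
  (List.finRange d).foldr (fun l g => (pd d l)^[s l] g) f

/-- The constant-coefficient differential operator `p(∂)`. -/
def polyOp (d : ℕ) (p : MvPolynomial (Fin d) ℝ) (f : EuclideanSpace ℝ (Fin d) → ℝ) :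
    EuclideanSpace ℝ (Fin d) → ℝ :=
  fun x => ∑ s ∈ p.support, p.coeff s * Dmulti d s f x

/-- The Laplacian on functions on Euclidean space. -/
def lap (d : ℕ) (f : EuclideanSpace ℝ (Fin d) → ℝ) : EuclideanSpace ℝ (Fin d) → ℝ :=
  fun x => ∑ l : Fin d, pd d l (pd d l f) x

/-- The formal Laplacian on polynomials. -/
def lapPoly (d : ℕ) (p : MvPolynomial (Fin d) ℝ) : MvPolynomial (Fin d) ℝ :=
  ∑ l : Fin d, pderiv l (pderiv l p)

/-- Evaluation of a polynomial at a point of Euclidean space. -/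
def peval (d : ℕ) (p : MvPolynomial (Fin d) ℝ) (x : EuclideanSpace ℝ (Fin d)) : ℝ :=
  MvPolynomial.eval (fun l => x l) p

/-- The radial operator `(1/r) d/dr`. -/
def radOp (g : ℝ → ℝ) : ℝ → ℝ := fun r => deriv g r / r

namespace Hobson

variable {d : ℕ} {U : Set (EuclideanSpace ℝ (Fin d))}
variable {f g : EuclideanSpace ℝ (Fin d) → ℝ}

local notation "∞'" => ((⊤ : ℕ∞) : WithTop ℕ∞)

lemma infty_add_one_le : ∞' + 1 ≤ ∞' := by
  norm_num

lemma two_le_infty : (2 : WithTop ℕ∞) ≤ ∞' := by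
  have : ((2:ℕ∞) : WithTop ℕ∞) ≤ ((⊤:ℕ∞) : WithTop ℕ∞) := by exact_mod_cast (le_top : (2:ℕ∞) ≤ ⊤)
  simpa using this

lemma pd_congr (hU : IsOpen U) (h : Set.EqOn f g U) (l : Fin d) :
    Set.EqOn (pd d l f) (pd d l g) U := by
  intro x hx
  have hfg : f =ᶠ[nhds x] g := Filter.eventuallyEq_of_mem (hU.mem_nhds hx) h
  simp only [pd, hfg.fderiv_eq]

lemma pd_smooth (hU : IsOpen U) (hf : ContDiffOn ℝ ∞' f U) (l : Fin d) :
    ContDiffOn ℝ ∞' (pd d l f) U := by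
  have h1 : ContDiffOn ℝ ∞' (fderiv ℝ f) U := hf.fderiv_of_isOpen hU infty_add_one_le
  exact h1.clm_apply contDiffOn_const

lemma pd_comm (hU : IsOpen U) (hf : ContDiffOn ℝ ∞' f U) (l k : Fin d) :
    Set.EqOn (pd d l (pd d k f)) (pd d k (pd d l f)) U := by
  intro x hx
  have hx' : ContDiffAt ℝ ∞' f x := hf.contDiffAt (hU.mem_nhds hx)
  have hsymm := hx'.isSymmSndFDerivAt (by simpa using two_le_infty)
  have hdf : DifferentiableAt ℝ (fderiv ℝ f) x :=
    ((hf.fderiv_of_isOpen hU infty_add_one_le).contDiffAt (hU.mem_nhds hx)).differentiableAt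
      (by simp)
  have key : ∀ v w : EuclideanSpace ℝ (Fin d),
      fderiv ℝ (fun y => fderiv ℝ f y w) x v = fderiv ℝ (fderiv ℝ f) x v w := by
    intro v w
    rw [fderiv_clm_apply hdf (differentiableAt_const _)]
    simp
  show fderiv ℝ (fun y => fderiv ℝ f y (EuclideanSpace.single k 1)) x (EuclideanSpace.single l 1)
      = fderiv ℝ (fun y => fderiv ℝ f y (EuclideanSpace.single l 1)) x (EuclideanSpace.single k 1)
  rw [key, key, hsymm.eq]


lemma one_le_infty : (1 : WithTop ℕ∞) ≤ ∞' := by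
  have : ((1:ℕ∞) : WithTop ℕ∞) ≤ ((⊤:ℕ∞) : WithTop ℕ∞) := by
    exact_mod_cast (le_top : (1:ℕ∞) ≤ ⊤)
  simpa using this

lemma iter_smooth (hU : IsOpen U) (i : Fin d) (n : ℕ) :
    ∀ f, ContDiffOn ℝ ∞' f U → ContDiffOn ℝ ∞' ((pd d i)^[n] f) U := by
  induction n with
  | zero => intro f hf; simpa using hf
  | succ n ih =>
      intro f hf
      rw [Function.iterate_succ_apply']
      exact pd_smooth hU (ih f hf) i

lemma chain_smooth (hU : IsOpen U) (t : Fin d → ℕ) (L : List (Fin d)) :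
    ∀ f, ContDiffOn ℝ ∞' f U →
      ContDiffOn ℝ ∞' (L.foldr (fun i g => (pd d i)^[t i] g) f) U := by
  induction L with
  | nil => intro f hf; exact hf
  | cons i L ih =>
      intro f hf
      exact iter_smooth hU i (t i) _ (ih f hf)

lemma iter_congr (hU : IsOpen U) (i : Fin d) (n : ℕ) {f g : EuclideanSpace ℝ (Fin d) → ℝ}
    (h : Set.EqOn f g U) :
    Set.EqOn ((pd d i)^[n] f) ((pd d i)^[n] g) U := by
  induction n with
  | zero => simpa using h
  | succ n ih =>
      rw [Function.iterate_succ_apply', Function.iterate_succ_apply']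
      exact pd_congr hU ih i

lemma pd_iter_comm (hU : IsOpen U) (l i : Fin d) (n : ℕ) :
    ∀ f, ContDiffOn ℝ ∞' f U →
      Set.EqOn (pd d l ((pd d i)^[n] f)) ((pd d i)^[n] (pd d l f)) U := by
  induction n with
  | zero => intro f _ x _; rfl
  | succ n ih =>
      intro f hf
      rw [Function.iterate_succ_apply', Function.iterate_succ_apply']
      exact (pd_comm hU (iter_smooth hU i n f hf) l i).trans (pd_congr hU (ih f hf) i)

lemma chain_ext (t t' : Fin d → ℕ) (L : List (Fin d)) (h : ∀ i ∈ L, t i = t' i)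
    (f : EuclideanSpace ℝ (Fin d) → ℝ) :
    L.foldr (fun i g => (pd d i)^[t i] g) f = L.foldr (fun i g => (pd d i)^[t' i] g) f := by
  induction L with
  | nil => rfl
  | cons i L ih =>
      simp only [List.foldr_cons]
      rw [ih (fun j hj => h j (List.mem_cons_of_mem _ hj)), h i List.mem_cons_self]

lemma chain_comm (hU : IsOpen U) (t : Fin d → ℕ) (l : Fin d) (L : List (Fin d)) :
    ∀ f, ContDiffOn ℝ ∞' f U →
      Set.EqOn (pd d l (L.foldr (fun i g => (pd d i)^[t i] g) f))
        (L.foldr (fun i g => (pd d i)^[t i] g) (pd d l f)) U := by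
  induction L with
  | nil => intro f _ x _; rfl
  | cons i L ih =>
      intro f hf
      simp only [List.foldr_cons]
      exact (pd_iter_comm hU l i (t i) _ (chain_smooth hU t L f hf)).trans
        (iter_congr hU i (t i) (ih f hf))

lemma chain_add_single (hU : IsOpen U) (s : Fin d →₀ ℕ) (l : Fin d) :
    ∀ L : List (Fin d), L.Nodup → l ∈ L →
      ∀ f, ContDiffOn ℝ ∞' f U →
      Set.EqOn (L.foldr (fun i g => (pd d i)^[(s + Finsupp.single l 1 : Fin d →₀ ℕ) i] g) f)
        (pd d l (L.foldr (fun i g => (pd d i)^[s i] g) f)) U := by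
  intro L
  induction L with
  | nil => intro _ h; simp at h
  | cons i L ih =>
      intro hnd hmem f hf
      simp only [List.foldr_cons]
      by_cases hi : i = l
      · subst hi
        have hnotin : i ∉ L := (List.nodup_cons.mp hnd).1
        have hext : L.foldr (fun j g => (pd d j)^[(s + Finsupp.single i 1 : Fin d →₀ ℕ) j] g) f
            = L.foldr (fun j g => (pd d j)^[s j] g) f := by
          apply chain_ext
          intro j hj
          have hji : j ≠ i := fun h => hnotin (h ▸ hj)
          simp [Finsupp.single_apply, Ne.symm hji]
        rw [hext]
        have hexp : (s + Finsupp.single i 1 : Fin d →₀ ℕ) i = s i + 1 := by simp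
        rw [hexp, Function.iterate_succ_apply']
        exact fun x _ => rfl
      · have hl : l ∈ L := by
          rcases List.mem_cons.mp hmem with h | h
          · exact absurd h.symm hi
          · exact h
        have hexp : (s + Finsupp.single l 1 : Fin d →₀ ℕ) i = s i := by
          have hli : ¬ l = i := fun h => hi h.symm
          simp [Finsupp.single_apply, hli]
        rw [hexp]
        have h1 := iter_congr hU i (s i)
          (ih (List.nodup_cons.mp hnd).2 hl f hf)
        have h2 := (pd_iter_comm hU l i (s i) _
          (chain_smooth hU (fun j => s j) L f hf)).symm
        exact h1.trans h2

lemma Dmulti_add_single (hU : IsOpen U) (hf : ContDiffOn ℝ ∞' f U) (s : Fin d →₀ ℕ) (l : Fin d) :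
    Set.EqOn (Dmulti d (s + Finsupp.single l 1) f) (pd d l (Dmulti d s f)) U :=
  chain_add_single hU s l (List.finRange d) (List.nodup_finRange d) (List.mem_finRange l) f hf

lemma Dmulti_zero (f : EuclideanSpace ℝ (Fin d) → ℝ) : Dmulti d 0 f = f := by
  unfold Dmulti
  induction (List.finRange d) with
  | nil => rfl
  | cons i L ih => simpa using ih

end Hobson

namespace Hobson

local notation "∞'" => ((⊤ : ℕ∞) : WithTop ℕ∞)

lemma contDiff_peval (q : MvPolynomial (Fin d) ℝ) :
    ContDiff ℝ ∞' (fun x => peval d q x) := by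
  induction q using MvPolynomial.induction_on with
  | C a =>
      have h : (fun x : EuclideanSpace ℝ (Fin d) => peval d (C a) x) = fun _ => a := by
        funext y; simp [peval]
      rw [h]; exact contDiff_const
  | add p q hp hq =>
      have h : (fun x => peval d (p + q) x) = fun x => peval d p x + peval d q x := by
        funext y; simp [peval]
      rw [h]; exact hp.add hq
  | mul_X p i hp =>
      have h : (fun x => peval d (p * X i) x)
          = fun x => peval d p x * (EuclideanSpace.proj (𝕜 := ℝ) i) x := by
        funext y; simp [peval]
      rw [h]; exact hp.mul (EuclideanSpace.proj (𝕜 := ℝ) i).contDiff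

lemma differentiableAt_peval (q : MvPolynomial (Fin d) ℝ) (x : EuclideanSpace ℝ (Fin d)) :
    DifferentiableAt ℝ (fun y => peval d q y) x :=
  ((contDiff_peval q).differentiable (by simp)).differentiableAt

lemma pd_peval (l : Fin d) (q : MvPolynomial (Fin d) ℝ) (x : EuclideanSpace ℝ (Fin d)) :
    pd d l (fun y => peval d q y) x = peval d (pderiv l q) x := by
  induction q using MvPolynomial.induction_on with
  | C a =>
      have h : (fun y : EuclideanSpace ℝ (Fin d) => peval d (C a) y) = fun _ => a := by
        funext y; simp [peval]
      simp [pd, h, peval]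
  | add p q hp hq =>
      have h : (fun y => peval d (p + q) y) = fun y => peval d p y + peval d q y := by
        funext y; simp [peval]
      simp only [pd] at hp hq ⊢
      rw [h, fderiv_fun_add (differentiableAt_peval p x) (differentiableAt_peval q x)]
      have : peval d (pderiv l (p + q)) x = peval d (pderiv l p) x + peval d (pderiv l q) x := by
        simp [peval, map_add]
      rw [this, ← hp, ← hq]
      rfl
  | mul_X p i hp =>
      have h : (fun y => peval d (p * X i) y)
          = fun y => peval d p y * (EuclideanSpace.proj (𝕜 := ℝ) i) y := by
        funext y; simp [peval]
      simp only [pd] at hp ⊢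
      rw [h, fderiv_fun_mul (differentiableAt_peval p x) (EuclideanSpace.proj (𝕜 := ℝ) i).differentiableAt,
        (EuclideanSpace.proj (𝕜 := ℝ) i).fderiv]
      have hproj : (EuclideanSpace.proj (𝕜 := ℝ) i) (EuclideanSpace.single l 1)
          = if l = i then (1:ℝ) else 0 := by
        show (EuclideanSpace.single l (1:ℝ)) i = _
        rcases eq_or_ne l i with h | h
        · simp [h, EuclideanSpace.single_apply]
        · simp [EuclideanSpace.single_apply, h, Ne.symm h]
      have hpx : (EuclideanSpace.proj (𝕜 := ℝ) i) x = x i := rfl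
      simp only [ContinuousLinearMap.add_apply, ContinuousLinearMap.smul_apply, hproj, hpx,
        smul_eq_mul]
      have hrhs : peval d (pderiv l (p * X i)) x
          = peval d (pderiv l p) x * x i + peval d p x * (if l = i then (1:ℝ) else 0) := by
        rw [pderiv_mul]
        by_cases hli : l = i
        · subst hli; simp [peval, MvPolynomial.pderiv_X_self]
        · simp [peval, MvPolynomial.pderiv_X_of_ne hli, hli]
      rw [hrhs, hp]
      ring

end Hobson

namespace Hobson

local notation "∞'" => ((⊤ : ℕ∞) : WithTop ℕ∞)

lemma hasFDerivAt_norm' {x : EuclideanSpace ℝ (Fin d)} (hx : x ≠ 0) :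
    HasFDerivAt (fun y : EuclideanSpace ℝ (Fin d) => ‖y‖)
      (‖x‖⁻¹ • (innerSL ℝ x)) x := by
  have hx' : ‖x‖ ≠ 0 := norm_ne_zero_iff.mpr hx
  have hsq : HasFDerivAt (fun y : EuclideanSpace ℝ (Fin d) => ‖y‖^2)
      ((2:ℕ) • (innerSL ℝ x)) x := by
    simpa using (hasFDerivAt_id x).norm_sq
  have hsqrt : HasDerivAt Real.sqrt (1 / (2 * ‖x‖)) (‖x‖^2) := by
    have h := Real.hasDerivAt_sqrt (x := ‖x‖^2) (by positivity)
    simpa [Real.sqrt_sq (norm_nonneg x)] using h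
  have hcomp := hsqrt.comp_hasFDerivAt x hsq
  have hfun : Real.sqrt ∘ (fun y : EuclideanSpace ℝ (Fin d) => ‖y‖^2)
      = fun y => ‖y‖ := by
    funext y; simp [Function.comp, Real.sqrt_sq (norm_nonneg y)]
  rw [hfun] at hcomp
  refine hcomp.congr_fderiv ?_
  ext v
  simp only [ContinuousLinearMap.smul_apply, smul_eq_mul, nsmul_eq_mul, Nat.cast_ofNat]
  field_simp

lemma radial_hasFDerivAt {F : ℝ → ℝ} (hF : ContDiffOn ℝ ∞' F (Set.Ioi 0))
    {x : EuclideanSpace ℝ (Fin d)} (hx : x ≠ 0) :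
    HasFDerivAt (fun y => F ‖y‖) ((deriv F ‖x‖) • (‖x‖⁻¹ • innerSL ℝ x)) x := by
  have hxpos : (0:ℝ) < ‖x‖ := norm_pos_iff.mpr hx
  have hFd : DifferentiableAt ℝ F ‖x‖ :=
    (hF.contDiffAt (isOpen_Ioi.mem_nhds hxpos)).differentiableAt (by simp)
  exact hFd.hasDerivAt.comp_hasFDerivAt x (hasFDerivAt_norm' hx)

lemma differentiableAt_radial_poly {F : ℝ → ℝ} (hF : ContDiffOn ℝ ∞' F (Set.Ioi 0))
    (q : MvPolynomial (Fin d) ℝ) {x : EuclideanSpace ℝ (Fin d)} (hx : x ≠ 0) :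
    DifferentiableAt ℝ (fun y => F ‖y‖ * peval d q y) x :=
  ((radial_hasFDerivAt hF hx).differentiableAt).mul (differentiableAt_peval q x)

lemma pd_radial_poly {F : ℝ → ℝ} (hF : ContDiffOn ℝ ∞' F (Set.Ioi 0))
    (q : MvPolynomial (Fin d) ℝ) (l : Fin d) {x : EuclideanSpace ℝ (Fin d)} (hx : x ≠ 0) :
    pd d l (fun y => F ‖y‖ * peval d q y) x
      = radOp F ‖x‖ * peval d (X l * q) x + F ‖x‖ * peval d (pderiv l q) x := by
  have hxn : ‖x‖ ≠ 0 := norm_ne_zero_iff.mpr hx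
  show fderiv ℝ (fun y => F ‖y‖ * peval d q y) x (EuclideanSpace.single l 1) = _
  rw [fderiv_fun_mul (radial_hasFDerivAt hF hx).differentiableAt (differentiableAt_peval q x),
    (radial_hasFDerivAt hF hx).fderiv]
  have hinner : (innerSL ℝ x) (EuclideanSpace.single l 1) = x l := by
    simp [EuclideanSpace.inner_single_right]
  have hpe : fderiv ℝ (fun y => peval d q y) x (EuclideanSpace.single l 1)
      = peval d (pderiv l q) x := pd_peval l q x
  have hXq : peval d (X l * q) x = x l * peval d q x := by simp [peval]
  simp only [ContinuousLinearMap.add_apply, ContinuousLinearMap.smul_apply, smul_eq_mul,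
    hinner, hpe, hXq]
  unfold radOp
  field_simp
  ring

lemma radOp_smooth {F : ℝ → ℝ} (hF : ContDiffOn ℝ ∞' F (Set.Ioi 0)) :
    ContDiffOn ℝ ∞' (radOp F) (Set.Ioi 0) := by
  have h1 : ContDiffOn ℝ ∞' (deriv F) (Set.Ioi 0) :=
    hF.deriv_of_isOpen isOpen_Ioi infty_add_one_le
  have h2 := h1.div (contDiffOn_id (E := ℝ) (𝕜 := ℝ) (n := ∞'))
    (fun r hr => ne_of_gt hr)
  exact h2

lemma radOp_iter_smooth {f₀ : ℝ → ℝ} (hf : ContDiffOn ℝ ∞' f₀ (Set.Ioi 0)) (k : ℕ) :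
    ContDiffOn ℝ ∞' (radOp^[k] f₀) (Set.Ioi 0) := by
  induction k with
  | zero => simpa using hf
  | succ k ih => rw [Function.iterate_succ_apply']; exact radOp_smooth ih

end Hobson

namespace Hobson

lemma pderiv_pderiv_comm (i j : Fin d) (p : MvPolynomial (Fin d) ℝ) :
    pderiv i (pderiv j p) = pderiv j (pderiv i p) := by
  induction p using MvPolynomial.induction_on' with
  | add p q hp hq => simp [map_add, hp, hq]
  | monomial s a =>
      by_cases hij : i = j
      · subst hij; rfl
      · simp only [pderiv_monomial]
        have h1 : (s - Finsupp.single j 1 : Fin d →₀ ℕ) i = s i := by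
          simp [Finsupp.tsub_apply, Finsupp.single_apply, Ne.symm hij]
        have h2 : (s - Finsupp.single i 1 : Fin d →₀ ℕ) j = s j := by
          simp [Finsupp.tsub_apply, Finsupp.single_apply, hij]
        have h3 : s - Finsupp.single j 1 - Finsupp.single i 1
            = s - Finsupp.single i 1 - Finsupp.single j 1 := by
          rw [tsub_tsub, tsub_tsub, add_comm]
        rw [h1, h2, h3, mul_right_comm]

lemma lapPoly_add (p q : MvPolynomial (Fin d) ℝ) :
    lapPoly d (p + q) = lapPoly d p + lapPoly d q := by
  simp [lapPoly, map_add, Finset.sum_add_distrib]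

lemma lapPoly_smul (c : ℝ) (p : MvPolynomial (Fin d) ℝ) :
    lapPoly d (c • p) = c • lapPoly d p := by
  simp [lapPoly, map_smul, Finset.smul_sum]

lemma lapPoly_zero : lapPoly d (0 : MvPolynomial (Fin d) ℝ) = 0 := by simp [lapPoly]

lemma pderiv_lapPoly (l : Fin d) (p : MvPolynomial (Fin d) ℝ) :
    pderiv l (lapPoly d p) = lapPoly d (pderiv l p) := by
  simp only [lapPoly, map_sum]
  apply Finset.sum_congr rfl
  intro i _
  rw [pderiv_pderiv_comm l i (pderiv i p), pderiv_pderiv_comm l i p]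

lemma lapIter_add (j : ℕ) (p q : MvPolynomial (Fin d) ℝ) :
    (lapPoly d)^[j] (p + q) = (lapPoly d)^[j] p + (lapPoly d)^[j] q := by
  induction j generalizing p q with
  | zero => rfl
  | succ j ih => simp [Function.iterate_succ_apply, lapPoly_add, ih]

lemma lapIter_smul (j : ℕ) (c : ℝ) (p : MvPolynomial (Fin d) ℝ) :
    (lapPoly d)^[j] (c • p) = c • (lapPoly d)^[j] p := by
  induction j generalizing p with
  | zero => rfl
  | succ j ih => simp [Function.iterate_succ_apply, lapPoly_smul, ih]

lemma lapIter_zero (j : ℕ) : (lapPoly d)^[j] (0 : MvPolynomial (Fin d) ℝ) = 0 := by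
  induction j with
  | zero => rfl
  | succ j ih => simp [Function.iterate_succ_apply, lapPoly_zero, ih]

lemma pderiv_lapIter (l : Fin d) (j : ℕ) (p : MvPolynomial (Fin d) ℝ) :
    pderiv l ((lapPoly d)^[j] p) = (lapPoly d)^[j] (pderiv l p) := by
  induction j generalizing p with
  | zero => rfl
  | succ j ih => simp [Function.iterate_succ_apply, pderiv_lapPoly, ih]

lemma degree_add' (a b : Fin d →₀ ℕ) : (a + b).degree = a.degree + b.degree := by
  simp [Finsupp.degree_eq_weight_one, map_add]

lemma degree_single' (i : Fin d) (n : ℕ) : (Finsupp.single i n).degree = n := by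
  by_cases hn : n = 0
  · simp [hn, map_zero]
  · exact Finsupp.degree_single i n

lemma isHomog_pderiv {p : MvPolynomial (Fin d) ℝ} {n : ℕ} (hp : p.IsHomogeneous n) (i : Fin d) :
    (pderiv i p).IsHomogeneous (n - 1) := by
  have hrw : pderiv i p = ∑ s ∈ p.support, pderiv i (monomial s (coeff s p)) := by
    conv_lhs => rw [p.as_sum]
    rw [map_sum]
  rw [hrw]
  apply IsHomogeneous.sum
  intro s hs
  rw [pderiv_monomial]
  by_cases hsi : s i = 0
  · simp only [hsi, Nat.cast_zero, mul_zero, map_zero]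
    exact isHomogeneous_zero _ _ _
  · apply isHomogeneous_monomial
    have hdeg : s.degree = n := by
      have := hp (MvPolynomial.mem_support_iff.mp hs)
      simpa [Finsupp.degree_eq_weight_one, Pi.one_def] using this
    have hsplit : s = (s - Finsupp.single i 1) + Finsupp.single i 1 := by
      ext j
      simp only [Finsupp.add_apply, Finsupp.tsub_apply, Finsupp.single_apply]
      by_cases hji : i = j
      · subst hji; simp; omega
      · simp [hji]
    have := congrArg Finsupp.degree hsplit
    rw [degree_add', degree_single'] at this
    omega

lemma pderiv_eq_zero_of_homog_zero {p : MvPolynomial (Fin d) ℝ}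
    (hp : p.IsHomogeneous 0) (i : Fin d) : pderiv i p = 0 := by
  have hrw : pderiv i p = ∑ s ∈ p.support, pderiv i (monomial s (coeff s p)) := by
    conv_lhs => rw [p.as_sum]
    rw [map_sum]
  rw [hrw]
  apply Finset.sum_eq_zero
  intro s hs
  have hdeg : s.degree = 0 := by
    have := hp (MvPolynomial.mem_support_iff.mp hs)
    simpa [Finsupp.degree_eq_weight_one, Pi.one_def] using this
  have hs0 : s = 0 := (Finsupp.degree_eq_zero_iff s).mp hdeg
  subst hs0
  simp [pderiv_monomial]

lemma lapPoly_homog {p : MvPolynomial (Fin d) ℝ} {n : ℕ} (hp : p.IsHomogeneous n) :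
    (lapPoly d p).IsHomogeneous (n - 2) := by
  apply IsHomogeneous.sum
  intro i _
  have := isHomog_pderiv (isHomog_pderiv hp i) i
  simpa [Nat.sub_sub] using this

lemma lapIter_homog (j : ℕ) {p : MvPolynomial (Fin d) ℝ} {n : ℕ} (hp : p.IsHomogeneous n) :
    ((lapPoly d)^[j] p).IsHomogeneous (n - 2 * j) := by
  induction j generalizing p n with
  | zero => simpa using hp
  | succ j ih =>
      rw [Function.iterate_succ_apply]
      have := ih (lapPoly_homog hp)
      have harith : n - 2 - 2 * j = n - 2 * (j + 1) := by omega
      rwa [harith] at this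

lemma lapPoly_eq_zero_of_le_one {p : MvPolynomial (Fin d) ℝ} {n : ℕ}
    (hp : p.IsHomogeneous n) (hn : n ≤ 1) : lapPoly d p = 0 := by
  apply Finset.sum_eq_zero
  intro i _
  have h1 : (pderiv i p).IsHomogeneous 0 := by
    have := isHomog_pderiv hp i
    rwa [Nat.sub_eq_zero_of_le hn] at this
  rw [pderiv_eq_zero_of_homog_zero h1 i]

lemma lapIter_eq_zero {p : MvPolynomial (Fin d) ℝ} {n : ℕ} (hp : p.IsHomogeneous n) :
    ∀ j, n < 2 * j → (lapPoly d)^[j] p = 0 := by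
  intro j
  induction j generalizing p n with
  | zero => omega
  | succ j ih =>
      intro hj
      rw [Function.iterate_succ_apply]
      by_cases hn : n ≤ 1
      · rw [lapPoly_eq_zero_of_le_one hp hn]; exact lapIter_zero j
      · exact ih (lapPoly_homog hp) (by omega)

lemma pderiv_lapIter_eq_zero {p : MvPolynomial (Fin d) ℝ} {n : ℕ}
    (hp : p.IsHomogeneous n) (l : Fin d) (j : ℕ) (h : n ≤ 2 * j) :
    pderiv l ((lapPoly d)^[j] p) = 0 := by
  apply pderiv_eq_zero_of_homog_zero
  · have := lapIter_homog j hp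
    rwa [Nat.sub_eq_zero_of_le h] at this

lemma lapPoly_X_mul (l : Fin d) (q : MvPolynomial (Fin d) ℝ) :
    lapPoly d (X l * q) = X l * lapPoly d q + (2:ℝ) • pderiv l q := by
  have key : ∀ i : Fin d, pderiv i (pderiv i (X l * q))
      = X l * pderiv i (pderiv i q) + (if i = l then (2:ℝ) • pderiv l q else 0) := by
    intro i
    by_cases hil : i = l
    · subst hil
      simp only [pderiv_mul, pderiv_X_self, map_add, one_mul, if_pos, smul_eq_mul, two_smul]
      ring
    · have hli : l ≠ i := fun h => hil h.symm
      rw [pderiv_mul, pderiv_X_of_ne hli, zero_mul, zero_add, pderiv_mul,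
        pderiv_X_of_ne hli, zero_mul, zero_add, if_neg hil, add_zero]
  show (∑ i : Fin d, pderiv i (pderiv i (X l * q))) = _
  rw [Finset.sum_congr rfl (fun i _ => key i), Finset.sum_add_distrib, ← Finset.mul_sum]
  congr 1
  simp

end Hobson

namespace Hobson

lemma lapIter_X_mul (l : Fin d) (q : MvPolynomial (Fin d) ℝ) (j : ℕ) :
    (lapPoly d)^[j+1] (X l * q) = X l * (lapPoly d)^[j+1] q
      + ((2 * (j+1) : ℝ)) • pderiv l ((lapPoly d)^[j] q) := by
  induction j with
  | zero =>
      have h := lapPoly_X_mul l q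
      simpa using h
  | succ j ih =>
      rw [Function.iterate_succ_apply' (lapPoly d) (j+1) (X l * q), ih,
        lapPoly_add, lapPoly_smul, lapPoly_X_mul]
      rw [show lapPoly d ((lapPoly d)^[j+1] q) = (lapPoly d)^[j+1+1] q from
        (Function.iterate_succ_apply' (lapPoly d) (j+1) q).symm]
      rw [← pderiv_lapPoly]
      rw [show lapPoly d ((lapPoly d)^[j] q) = (lapPoly d)^[j+1] q from
        (Function.iterate_succ_apply' (lapPoly d) j q).symm]
      push_cast
      module

end Hobson

namespace Hobson

local notation "∞'" => ((⊤ : ℕ∞) : WithTop ℕ∞)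

def RHS (f₀ : ℝ → ℝ) {d : ℕ} (m : ℕ) (q : MvPolynomial (Fin d) ℝ)
    (x : EuclideanSpace ℝ (Fin d)) : ℝ :=
  ∑ j ∈ Finset.range (m / 2 + 1),
    (1 / (2 ^ j * (Nat.factorial j) : ℝ)) * radOp^[m - j] f₀ ‖x‖ *
      peval d ((lapPoly d)^[j] q) x

lemma peval_add (p q : MvPolynomial (Fin d) ℝ) (x) :
    peval d (p + q) x = peval d p x + peval d q x := by simp [peval]

lemma peval_smul (r : ℝ) (p : MvPolynomial (Fin d) ℝ) (x) :
    peval d (r • p) x = r * peval d p x := by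
  simp [peval, MvPolynomial.smul_eq_C_mul]

lemma peval_zero (x : EuclideanSpace ℝ (Fin d)) : peval d 0 x = 0 := by simp [peval]

lemma coeff_succ (i : ℕ) :
    (1 / (2 ^ (i+1) * (Nat.factorial (i+1)) : ℝ)) * (2 * ((i:ℝ)+1))
      = 1 / (2 ^ i * (Nat.factorial i) : ℝ) := by
  have h1 : (Nat.factorial (i+1) : ℝ) = ((i:ℝ)+1) * Nat.factorial i := by
    rw [Nat.factorial_succ]; push_cast; ring
  have h2 : (Nat.factorial i : ℝ) ≠ 0 := Nat.cast_ne_zero.mpr (Nat.factorial_ne_zero i)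
  have h3 : ((i:ℝ)+1) ≠ 0 := by positivity
  rw [h1]
  field_simp
  ring

lemma sum_shuffle (m : ℕ) (A B : ℕ → ℝ)
    (hA : ∀ j, m < 2*j → A j = 0) (hB : ∀ i, m ≤ 2*i → B i = 0) :
    ∑ j ∈ Finset.range (m/2+1), (A j + B j)
      = ∑ i ∈ Finset.range ((m+1)/2), (A (i+1) + B i) + A 0 := by
  rw [Finset.sum_add_distrib, Finset.sum_add_distrib]
  have hAe : ∑ j ∈ Finset.range (m/2+1), A j = ∑ j ∈ Finset.range ((m+1)/2+1), A j :=
    Finset.sum_subset (Finset.range_subset_range.mpr (by omega))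
      (fun j hj hnj => hA j (by simp only [Finset.mem_range] at hj hnj; omega))
  have hBe : ∑ i ∈ Finset.range ((m+1)/2), B i = ∑ i ∈ Finset.range (m/2+1), B i :=
    Finset.sum_subset (Finset.range_subset_range.mpr (by omega))
      (fun i hi hni => hB i (by simp only [Finset.mem_range] at hi hni; omega))
  rw [hAe, ← hBe, Finset.sum_range_succ' A ((m+1)/2)]
  ring

lemma step {f₀ : ℝ → ℝ} (hf : ContDiffOn ℝ ∞' f₀ (Set.Ioi 0))
    (m : ℕ) (q : MvPolynomial (Fin d) ℝ) (hq : q.IsHomogeneous m) (l : Fin d)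
    (g : EuclideanSpace ℝ (Fin d) → ℝ)
    (hg : ∀ y : EuclideanSpace ℝ (Fin d), y ≠ 0 → g y = RHS f₀ m q y)
    {x : EuclideanSpace ℝ (Fin d)} (hx : x ≠ 0) :
    pd d l g x = RHS f₀ (m+1) (X l * q) x := by
  have hFs : ∀ k : ℕ, ContDiffOn ℝ ∞' (radOp^[k] f₀) (Set.Ioi 0) := radOp_iter_smooth hf
  -- the A and B terms
  set A : ℕ → ℝ := fun j => (1 / (2 ^ j * (Nat.factorial j) : ℝ)) * radOp^[m+1-j] f₀ ‖x‖ *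
      peval d (X l * (lapPoly d)^[j] q) x with hA
  set B : ℕ → ℝ := fun i => (1 / (2 ^ i * (Nat.factorial i) : ℝ)) * radOp^[m-i] f₀ ‖x‖ *
      peval d (pderiv l ((lapPoly d)^[i] q)) x with hB
  -- step (a): replace g by RHS near x
  have hgR : pd d l g x = pd d l (fun y => RHS f₀ m q y) x := by
    have hev : g =ᶠ[nhds x] (fun y => RHS f₀ m q y) :=
      Filter.eventuallyEq_of_mem
        ((isOpen_ne : IsOpen {y : EuclideanSpace ℝ (Fin d) | y ≠ 0}).mem_nhds hx)
        (fun y hy => hg y hy)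
    simp only [pd, hev.fderiv_eq]
  -- step (b): differentiate the sum
  have hsum : pd d l (fun y => RHS f₀ m q y) x
      = ∑ j ∈ Finset.range (m/2+1), (A j + B j) := by
    have hre : (fun y => RHS f₀ m q y)
        = fun y => ∑ j ∈ Finset.range (m/2+1),
            (1 / (2 ^ j * (Nat.factorial j) : ℝ)) *
              (radOp^[m-j] f₀ ‖y‖ * peval d ((lapPoly d)^[j] q) y) := by
      funext y
      exact Finset.sum_congr rfl (fun j _ => by rw [mul_assoc])
    show fderiv ℝ (fun y => RHS f₀ m q y) x (EuclideanSpace.single l 1) = _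
    rw [hre, fderiv_fun_sum (fun j _ =>
      ((differentiableAt_radial_poly (hFs (m-j)) ((lapPoly d)^[j] q) hx).const_mul _))]
    rw [ContinuousLinearMap.sum_apply]
    refine Finset.sum_congr rfl (fun j hj => ?_)
    rw [fderiv_const_mul (differentiableAt_radial_poly (hFs (m-j)) ((lapPoly d)^[j] q) hx)]
    simp only [ContinuousLinearMap.smul_apply, smul_eq_mul]
    have hpd := pd_radial_poly (hFs (m-j)) ((lapPoly d)^[j] q) l hx
    have hpd' : fderiv ℝ (fun y => radOp^[m-j] f₀ ‖y‖ * peval d ((lapPoly d)^[j] q) y) x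
        (EuclideanSpace.single l 1)
        = radOp (radOp^[m-j] f₀) ‖x‖ * peval d (X l * (lapPoly d)^[j] q) x
          + radOp^[m-j] f₀ ‖x‖ * peval d (pderiv l ((lapPoly d)^[j] q)) x := hpd
    rw [hpd']
    have hidx : (m - j).succ = m + 1 - j := by
      simp only [Finset.mem_range] at hj; omega
    rw [← Function.iterate_succ_apply' radOp (m-j) f₀, hidx]
    simp only [hA, hB]
    ring
  -- vanishing
  have hAvan : ∀ j, m < 2*j → A j = 0 := by
    intro j hj
    simp only [hA]
    rw [lapIter_eq_zero hq j hj, mul_zero]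
    simp [peval]
  have hBvan : ∀ i, m ≤ 2*i → B i = 0 := by
    intro i hi
    simp only [hB]
    rw [pderiv_lapIter_eq_zero hq l i hi]
    simp [peval]
  -- step (c): identify the target
  have htar : RHS f₀ (m+1) (X l * q) x
      = ∑ i ∈ Finset.range ((m+1)/2), (A (i+1) + B i) + A 0 := by
    unfold RHS
    rw [Finset.sum_range_succ']
    congr 1
    · refine Finset.sum_congr rfl (fun i hi => ?_)
      rw [lapIter_X_mul l q i, peval_add, peval_smul]
      simp only [hA, hB]
      have hidx : m + 1 - (i+1) = m - i := by omega
      rw [hidx, ← coeff_succ i]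
      ring
  rw [hgR, hsum, sum_shuffle m A B hAvan hBvan, htar]

end Hobson

namespace Hobson

local notation "∞''" => ((⊤ : ℕ∞) : WithTop ℕ∞)

lemma radial_smooth {F : ℝ → ℝ} (hF : ContDiffOn ℝ ∞'' F (Set.Ioi 0)) :
    ContDiffOn ℝ ∞'' (fun y : EuclideanSpace ℝ (Fin d) => F ‖y‖)
      {y : EuclideanSpace ℝ (Fin d) | y ≠ 0} := by
  have hnorm : ContDiffOn ℝ ∞'' (fun y : EuclideanSpace ℝ (Fin d) => ‖y‖)
      {y : EuclideanSpace ℝ (Fin d) | y ≠ 0} :=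
    fun y hy => (contDiffAt_norm ℝ hy).contDiffWithinAt
  exact ContDiffOn.comp hF hnorm (fun y hy => norm_pos_iff.mpr hy)

lemma lapIter_finsum (j : ℕ) {ι : Type*} [DecidableEq ι] (t : Finset ι) (P : ι → MvPolynomial (Fin d) ℝ) :
    (lapPoly d)^[j] (∑ s ∈ t, P s) = ∑ s ∈ t, (lapPoly d)^[j] (P s) := by
  induction t using Finset.induction with
  | empty => simp [lapIter_zero]
  | insert _ _ hnot ih =>
      rw [Finset.sum_insert hnot, lapIter_add, ih, Finset.sum_insert hnot]

lemma peval_finsum {ι : Type*} (t : Finset ι) (P : ι → MvPolynomial (Fin d) ℝ)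
    (x : EuclideanSpace ℝ (Fin d)) :
    peval d (∑ s ∈ t, P s) x = ∑ s ∈ t, peval d (P s) x := by simp [peval]

lemma key {f₀ : ℝ → ℝ} (hf : ContDiffOn ℝ ∞'' f₀ (Set.Ioi 0)) :
    ∀ (m : ℕ) (s : Fin d →₀ ℕ), s.degree = m →
      ∀ x : EuclideanSpace ℝ (Fin d), x ≠ 0 →
        Dmulti d s (fun y => f₀ ‖y‖) x = RHS f₀ m (monomial s 1) x := by
  intro m
  induction m with
  | zero =>
      intro s hs x hx
      have hs0 : s = 0 := (Finsupp.degree_eq_zero_iff s).mp hs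
      subst hs0
      rw [Dmulti_zero]
      unfold RHS
      simp [peval, MvPolynomial.eval_monomial]
  | succ m ih =>
      intro s hs x hx
      have hsne : s ≠ 0 := by
        intro h
        rw [h, map_zero] at hs
        omega
      obtain ⟨l, hl⟩ : ∃ l, s l ≠ 0 := by
        by_contra h
        push_neg at h
        exact hsne (Finsupp.ext fun a => h a)
      have hsplit : s = (s - Finsupp.single l 1) + Finsupp.single l 1 := by
        ext j
        simp only [Finsupp.add_apply, Finsupp.tsub_apply, Finsupp.single_apply]
        by_cases hji : l = j
        · subst hji; simp; omega
        · simp [hji]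
      have hdeg' : (s - Finsupp.single l 1).degree = m := by
        have := congrArg Finsupp.degree hsplit
        rw [degree_add', degree_single'] at this
        omega
      have hfs : ContDiffOn ℝ ∞'' (fun y : EuclideanSpace ℝ (Fin d) => f₀ ‖y‖)
          {y : EuclideanSpace ℝ (Fin d) | y ≠ 0} := radial_smooth hf
      have hD := Dmulti_add_single
        (isOpen_ne : IsOpen {y : EuclideanSpace ℝ (Fin d) | y ≠ 0}) hfs
        (s - Finsupp.single l 1) l
      have hmem : x ∈ {y : EuclideanSpace ℝ (Fin d) | y ≠ 0} := hx
      rw [hsplit, hD hmem]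
      have hstep := step hf m (monomial (s - Finsupp.single l 1) 1)
        (isHomogeneous_monomial 1 hdeg') l
        (Dmulti d (s - Finsupp.single l 1) (fun y => f₀ ‖y‖))
        (fun y hy => ih (s - Finsupp.single l 1) hdeg' y hy) hx
      rw [hstep]
      congr 1
      rw [← pow_one (X l : MvPolynomial (Fin d) ℝ), X_pow_eq_monomial, monomial_mul, one_mul,
        add_comm]

end Hobson

theorem hobson_formula (d m : ℕ) (p : MvPolynomial (Fin d) ℝ)
    (hp : p.IsHomogeneous m) (f₀ : ℝ → ℝ)
    (hf : ContDiffOn ℝ (⊤ : ℕ∞) f₀ (Set.Ioi 0))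
    (x : EuclideanSpace ℝ (Fin d)) (hx : x ≠ 0) :
    polyOp d p (fun y => f₀ ‖y‖) x =
      ∑ j ∈ range (m / 2 + 1),
        (1 / (2 ^ j * (Nat.factorial j) : ℝ)) * radOp^[m - j] f₀ ‖x‖ *
          peval d ((lapPoly d)^[j] p) x := by
  have hf' : ContDiffOn ℝ ((⊤:ℕ∞) : WithTop ℕ∞) f₀ (Set.Ioi 0) := hf.of_le (by simp)
  have hmono : ∀ s ∈ p.support,
      p.coeff s * Dmulti d s (fun y => f₀ ‖y‖) x
        = p.coeff s * Hobson.RHS f₀ m (monomial s 1) x := by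
    intro s hs
    have hdeg : s.degree = m := by
      have := hp (MvPolynomial.mem_support_iff.mp hs)
      simpa [Finsupp.degree_eq_weight_one, Pi.one_def] using this
    rw [Hobson.key hf' m s hdeg x hx]
  show (∑ s ∈ p.support, p.coeff s * Dmulti d s (fun y => f₀ ‖y‖) x) = _
  rw [Finset.sum_congr rfl hmono]
  unfold Hobson.RHS
  rw [Finset.sum_congr rfl (fun s (_ : s ∈ p.support) => Finset.mul_sum _ _ _),
    Finset.sum_comm]
  refine Finset.sum_congr rfl fun j _ => ?_
  have h1 : peval d ((lapPoly d)^[j] p) x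
      = ∑ s ∈ p.support, coeff s p * peval d ((lapPoly d)^[j] (monomial s 1)) x := by
    conv_lhs => rw [p.as_sum]
    rw [Hobson.lapIter_finsum, Hobson.peval_finsum]
    refine Finset.sum_congr rfl fun s _ => ?_
    rw [show (monomial s) (coeff s p) = (coeff s p) • (monomial s) (1:ℝ) from by
        rw [smul_monomial, smul_eq_mul, mul_one],
      Hobson.lapIter_smul, Hobson.peval_smul]
  rw [h1, Finset.mul_sum]
  exact Finset.sum_congr rfl fun s _ => by ring
end
end

section
/- For any homogeneous polynomial p on ℝ^d of degree m, p(∂) e^{-‖x‖²/2} = Σ_{j=0}^{⌊m/2⌋} ((-1)^{m-j}/(2^j j!)) e^{-‖x‖²/2} (Δ^j p)(x), where Δ is the Laplacian and p(∂) the constant-coefficient operator obtained from p. -/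
/-!
Write `G = exp (-‖x‖² / 2)`. Differentiating `G · q` for a polynomial `q` gives `G · (∂ₗ q - xₗ q)`,
so `p(∂) G = G · p(B) 1` with `Bₗ = ∂ₗ - xₗ`. The commutator `[Δ, xₗ] = 2 ∂ₗ` shows that
`E = exp (-Δ / 2)` (a finite sum on polynomials) satisfies `Bₗ ∘ E = E ∘ (-xₗ)`; as `E 1 = 1`,
`p(B) 1 = E (p(-x)) = (-1)ᵐ E p`, and expanding `E p` gives the formula.
-/

open Finset MvPolynomial Real

noncomputable section

theorem MvPolynomial.pderiv_pderiv_comm {σ R : Type*} [CommRing R] (i j : σ)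
    (q : MvPolynomial σ R) : pderiv i (pderiv j q) = pderiv j (pderiv i q) := by
  classical
  have h : ⁅pderiv i, pderiv j⁆ = (0 : Derivation R (MvPolynomial σ R) (MvPolynomial σ R)) :=
    derivation_ext fun k => by
      rw [Derivation.commutator_apply, pderiv_X, pderiv_X]
      simp [Pi.single_apply, apply_ite]
  simpa [Derivation.commutator_apply, sub_eq_zero] using congr($h q)

theorem MvPolynomial.IsHomogeneous.pderiv_eq_zero {σ R : Type*} [CommSemiring R]
    {q : MvPolynomial σ R} (h : q.IsHomogeneous 0) (i : σ) : pderiv i q = 0 := by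
  rw [← totalDegree_zero_iff_isHomogeneous, totalDegree_eq_zero_iff_eq_C] at h
  rw [h, pderiv_C]

section Laplacian

variable {d : ℕ}

def lapPolyLinear (d : ℕ) : Module.End ℝ (MvPolynomial (Fin d) ℝ) :=
  ∑ l : Fin d, (pderiv l).toLinearMap * (pderiv l).toLinearMap

theorem coe_lapPolyLinear : ⇑(lapPolyLinear d) = lapPoly d := by
  ext1 q
  simp [lapPoly, lapPolyLinear]

theorem iterate_lapPoly_eq_coe_pow (j : ℕ) : (lapPoly d)^[j] = ⇑(lapPolyLinear d ^ j) := by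
  rw [Module.End.coe_pow, coe_lapPolyLinear]

theorem lapPoly_pderiv (l : Fin d) (q : MvPolynomial (Fin d) ℝ) :
    lapPoly d (pderiv l q) = pderiv l (lapPoly d q) := by
  simp only [lapPoly, map_sum, pderiv_pderiv_comm l]

theorem lapPoly_X_mul (l : Fin d) (q : MvPolynomial (Fin d) ℝ) :
    lapPoly d (X l * q) = X l * lapPoly d q + (2 : ℝ) • pderiv l q := by
  classical
  have key (i : Fin d) : pderiv i (pderiv i (X l * q)) =
      X l * pderiv i (pderiv i q) + if i = l then (2 : ℝ) • pderiv i q else 0 := by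
    rcases eq_or_ne i l with rfl | h
    · simp
      module
    · simp [pderiv_X_of_ne (Ne.symm h), h]
  simp only [lapPoly, key, sum_add_distrib, sum_ite_eq', mem_univ, if_true, mul_sum]

theorem iterate_lapPoly_X_mul (j : ℕ) (l : Fin d) (q : MvPolynomial (Fin d) ℝ) :
    (lapPoly d)^[j + 1] (X l * q) =
      X l * (lapPoly d)^[j + 1] q + (2 * (j + 1) : ℝ) • pderiv l ((lapPoly d)^[j] q) := by
  induction j with
  | zero => simpa using lapPoly_X_mul l q
  | succ j ih =>
    rw [Function.iterate_succ_apply', ih, ← coe_lapPolyLinear, map_add, map_smul,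
      coe_lapPolyLinear, lapPoly_X_mul, lapPoly_pderiv,
      ← Function.iterate_succ_apply' (lapPoly d) (j + 1),
      ← Function.iterate_succ_apply' (lapPoly d) j]
    push_cast
    module

theorem isHomogeneous_lapPoly {q : MvPolynomial (Fin d) ℝ} {n : ℕ}
    (h : q.IsHomogeneous n) : (lapPoly d q).IsHomogeneous (n - 2) :=
  IsHomogeneous.sum _ _ _ fun l _ => by
    simpa [Nat.sub_sub] using (h.pderiv (i := l)).pderiv (i := l)

theorem iterate_lapPoly_eq_zero_of_isHomogeneous {q : MvPolynomial (Fin d) ℝ} {n j : ℕ}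
    (h : q.IsHomogeneous n) (hj : n < 2 * j) : (lapPoly d)^[j] q = 0 := by
  induction j generalizing q n with
  | zero => omega
  | succ j ih =>
    rw [Function.iterate_succ_apply]
    rcases le_or_gt 2 n with hn | hn
    · exact ih (isHomogeneous_lapPoly h) (by omega)
    · have h1 (l : Fin d) : (pderiv l q).IsHomogeneous 0 := by
        simpa [show n - 1 = 0 by omega] using h.pderiv (i := l)
      simp [lapPoly, (h1 _).pderiv_eq_zero, iterate_lapPoly_eq_coe_pow]

theorem iterate_lapPoly_eq_zero {q : MvPolynomial (Fin d) ℝ} {j : ℕ}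
    (hj : q.totalDegree < 2 * j) : (lapPoly d)^[j] q = 0 := by
  rw [← sum_homogeneousComponent q, iterate_lapPoly_eq_coe_pow, map_sum,
    ← iterate_lapPoly_eq_coe_pow]
  exact sum_eq_zero fun i hi => iterate_lapPoly_eq_zero_of_isHomogeneous
    (homogeneousComponent_isHomogeneous i q) (by simp at hi; omega)

end Laplacian

section HeatOperator

variable {d : ℕ}

-- The Taylor coefficients of `exp (-t / 2)`.
def heatCoeff (j : ℕ) : ℝ := (-1) ^ j / (2 ^ j * j.factorial)

theorem heatCoeff_succ_mul (j : ℕ) : heatCoeff (j + 1) * (2 * (j + 1)) = -heatCoeff j := by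
  have : (j.factorial : ℝ) ≠ 0 := by positivity
  simp only [heatCoeff, Nat.factorial_succ, pow_succ]
  push_cast
  field_simp

theorem neg_one_pow_mul_heatCoeff {m j : ℕ} (hj : j ≤ m) :
    (-1) ^ m * heatCoeff j = (-1) ^ (m - j) / (2 ^ j * j.factorial) := by
  have hsq : ((-1 : ℝ) ^ j) * (-1) ^ j = 1 := by rw [← mul_pow]; norm_num
  rw [heatCoeff, ← Nat.sub_add_cancel hj, Nat.add_sub_cancel, pow_add]
  linear_combination (-1 : ℝ) ^ (m - j) / (2 ^ j * j.factorial) * hsq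

def expLapTrunc (d N : ℕ) : Module.End ℝ (MvPolynomial (Fin d) ℝ) :=
  ∑ j ∈ range N, heatCoeff j • lapPolyLinear d ^ j

theorem expLapTrunc_apply (N : ℕ) (q : MvPolynomial (Fin d) ℝ) :
    expLapTrunc d N q = ∑ j ∈ range N, heatCoeff j • (lapPoly d)^[j] q := by
  simp [expLapTrunc, iterate_lapPoly_eq_coe_pow]

theorem expLapTrunc_X_mul (N : ℕ) (l : Fin d) (q : MvPolynomial (Fin d) ℝ) :
    expLapTrunc d (N + 1) (X l * q) =
      X l * expLapTrunc d (N + 1) q - pderiv l (expLapTrunc d N q) := by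
  induction N with
  | zero => simp [expLapTrunc_apply]
  | succ N ih =>
    simp only [expLapTrunc_apply] at ih ⊢
    rw [sum_range_succ, ih, iterate_lapPoly_X_mul,
      sum_range_succ _ (N + 1), sum_range_succ _ N, map_add]
    simp only [Derivation.map_smul, mul_add, mul_smul_comm, smul_add]
    linear_combination (norm := module) heatCoeff_succ_mul N • pderiv l ((lapPoly d)^[N] q)

theorem finsum_heatCoeff_smul_eq {q : MvPolynomial (Fin d) ℝ} {N : ℕ}
    (hN : q.totalDegree < 2 * N) :
    ∑ᶠ j, heatCoeff j • (lapPoly d)^[j] q = expLapTrunc d N q := by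
  rw [expLapTrunc_apply]
  refine finsum_eq_sum_of_support_subset _ fun j hj => ?_
  by_contra hjN
  simp only [coe_range, Set.mem_Iio, not_lt] at hjN
  rw [Function.mem_support, iterate_lapPoly_eq_zero (by omega), smul_zero] at hj
  exact hj rfl

/-- `exp (-Δ / 2)`. The `finsum` is a genuine finite sum, by `finsum_heatCoeff_smul_eq`. -/
def expLap (d : ℕ) : Module.End ℝ (MvPolynomial (Fin d) ℝ) where
  toFun q := ∑ᶠ j, heatCoeff j • (lapPoly d)^[j] q
  map_add' q r := by
    have := totalDegree_add q r
    rw [finsum_heatCoeff_smul_eq (N := q.totalDegree + r.totalDegree + 1) (by omega),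
      finsum_heatCoeff_smul_eq (N := q.totalDegree + r.totalDegree + 1) (by omega),
      finsum_heatCoeff_smul_eq (N := q.totalDegree + r.totalDegree + 1) (by omega), map_add]
  map_smul' a q := by
    have := totalDegree_smul_le a q
    rw [finsum_heatCoeff_smul_eq (N := q.totalDegree + 1) (by omega),
      finsum_heatCoeff_smul_eq (N := q.totalDegree + 1) (by omega), map_smul, RingHom.id_apply]

theorem expLap_eq_expLapTrunc {q : MvPolynomial (Fin d) ℝ} {N : ℕ}
    (hN : q.totalDegree < 2 * N) : expLap d q = expLapTrunc d N q :=
  finsum_heatCoeff_smul_eq hN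

theorem expLap_one : expLap d 1 = 1 := by
  simp [expLap_eq_expLapTrunc (q := 1) (N := 1) (by simp), expLapTrunc_apply, heatCoeff]

theorem expLap_X_mul (l : Fin d) (q : MvPolynomial (Fin d) ℝ) :
    expLap d (X l * q) = X l * expLap d q - pderiv l (expLap d q) := by
  have hdeg : (X l * q).totalDegree ≤ q.totalDegree + 1 :=
    (totalDegree_mul _ _).trans (by rw [totalDegree_X]; omega)
  rw [expLap_eq_expLapTrunc (N := q.totalDegree + 2) (by omega), expLapTrunc_X_mul,
    ← expLap_eq_expLapTrunc (by omega), ← expLap_eq_expLapTrunc (by omega)]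

-- `∂ₗ` conjugated by the Gaussian: `e^{‖x‖²/2} ∂ₗ (e^{-‖x‖²/2} q)`.
def gaussPderiv (l : Fin d) (q : MvPolynomial (Fin d) ℝ) : MvPolynomial (Fin d) ℝ :=
  pderiv l q - X l * q

theorem semiconj_expLap_gaussPderiv (l : Fin d) :
    Function.Semiconj (expLap d) (fun q => -X l * q) (gaussPderiv l) := fun q => by
  change expLap d (-X l * q) = _
  rw [neg_mul, map_neg, expLap_X_mul, gaussPderiv]
  ring

end HeatOperator

section Analysis

variable {d : ℕ}

theorem differentiable_peval (q : MvPolynomial (Fin d) ℝ) : Differentiable ℝ (peval d q) :=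
  fun x => ((AnalyticOnNhd.eval_continuousLinearMap
    (EuclideanSpace.equiv (Fin d) ℝ).toContinuousLinearMap q) x trivial).differentiableAt

theorem pd_mul {f g : EuclideanSpace ℝ (Fin d) → ℝ} {x : EuclideanSpace ℝ (Fin d)}
    (hf : DifferentiableAt ℝ f x) (hg : DifferentiableAt ℝ g x) (l : Fin d) :
    pd d l (fun y => f y * g y) x = f x * pd d l g x + g x * pd d l f x := by
  simp [pd, fderiv_fun_mul hf hg]

theorem pd_peval (l : Fin d) (q : MvPolynomial (Fin d) ℝ) (x : EuclideanSpace ℝ (Fin d)) :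
    pd d l (peval d q) x = peval d (pderiv l q) x := by
  induction q using MvPolynomial.induction_on with
  | C a =>
    have hC : peval d (C a) = fun _ => a := funext fun _ => eval_C a
    simp [pd, hC, peval]
  | add p q hp hq =>
    have hadd : peval d (p + q) = fun y => peval d p y + peval d q y :=
      funext fun _ => map_add _ _ _
    simp only [pd] at hp hq ⊢
    rw [hadd, fderiv_fun_add (differentiable_peval p x) (differentiable_peval q x)]
    simp [hp, hq, peval]
  | mul_X p i hp =>
    classical
    have hmul : peval d (p * X i) = fun y => peval d p y * EuclideanSpace.proj i y :=
      funext fun _ => by simp [peval]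
    have hproj : fderiv ℝ (EuclideanSpace.proj i) x = EuclideanSpace.proj (𝕜 := ℝ) i :=
      ContinuousLinearMap.fderiv _
    rw [hmul, pd_mul (differentiable_peval p x) (EuclideanSpace.proj i).differentiableAt, hp, pd,
      hproj]
    simp [peval, pderiv_X, Pi.single_apply, PiLp.single_apply, eq_comm (a := i), apply_ite]

theorem hasFDerivAt_gaussian (x : EuclideanSpace ℝ (Fin d)) :
    HasFDerivAt (fun y : EuclideanSpace ℝ (Fin d) => Real.exp (-‖y‖ ^ 2 / 2))
      (-Real.exp (-‖x‖ ^ 2 / 2) • innerSL ℝ x) x := by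
  have hfun : (fun y : EuclideanSpace ℝ (Fin d) => Real.exp (-‖y‖ ^ 2 / 2)) =
      fun y => Real.exp (-1 / 2 * ‖id y‖ ^ 2) := funext fun y => by rw [id]; ring_nf
  rw [hfun]
  refine ((hasFDerivAt_id x).norm_sq.const_mul (-1 / 2 : ℝ)).exp.congr_fderiv ?_
  ext v
  simp
  ring_nf

theorem pd_gaussian (l : Fin d) (x : EuclideanSpace ℝ (Fin d)) :
    pd d l (fun y => Real.exp (-‖y‖ ^ 2 / 2)) x = -x l * Real.exp (-‖x‖ ^ 2 / 2) := by
  simp [pd, (hasFDerivAt_gaussian x).fderiv, EuclideanSpace.inner_single_right, mul_comm]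

end Analysis

section Gaussian

variable {d : ℕ}

def gaussianMul (d : ℕ) (q : MvPolynomial (Fin d) ℝ) : EuclideanSpace ℝ (Fin d) → ℝ :=
  fun y => Real.exp (-‖y‖ ^ 2 / 2) * peval d q y

theorem semiconj_gaussianMul_gaussPderiv (l : Fin d) :
    Function.Semiconj (gaussianMul d) (gaussPderiv l) (pd d l) := fun q => by
  funext x
  unfold gaussianMul
  rw [pd_mul (hasFDerivAt_gaussian x).differentiableAt (differentiable_peval q x), pd_peval,
    pd_gaussian]
  simp only [gaussPderiv, peval, map_sub, map_mul, eval_X]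
  ring

theorem List.foldr_iterate_of_semiconj {ι α β : Type*} {φ : α → β} {f : ι → α → α}
    {g : ι → β → β} (h : ∀ i, Function.Semiconj φ (f i) (g i)) (s : ι → ℕ) (L : List ι)
    (a : α) :
    L.foldr (fun i b => (g i)^[s i] b) (φ a) = φ (L.foldr (fun i b => (f i)^[s i] b) a) := by
  induction L with
  | nil => rfl
  | cons i L ih => simp only [List.foldr_cons, ih, ((h i).iterate_right (s i)).eq]

theorem foldr_iterate_neg_X_mul_one (s : Fin d →₀ ℕ) :
    (List.finRange d).foldr (fun l q => (fun q => -X l * q)^[s l] q) 1 =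
      (-1 : ℝ) ^ s.degree • monomial s (1 : ℝ) := by
  have hfoldr (L : List (Fin d)) (b : MvPolynomial (Fin d) ℝ) :
      L.foldr (fun l q => (-X l) ^ s l * q) b = (L.map fun l => (-X l) ^ s l).prod * b := by
    induction L with
    | nil => simp
    | cons l L ih => simp only [List.foldr_cons, List.map_cons, List.prod_cons, ih, mul_assoc]
  simp only [mul_left_iterate]
  rw [hfoldr, mul_one, ← Fin.prod_univ_def, monomial_eq, Finsupp.prod_fintype _ _ (by simp),
    Finsupp.degree_eq_sum, prod_congr rfl fun l _ => neg_pow (X l : MvPolynomial (Fin d) ℝ) (s l),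
    prod_mul_distrib, prod_pow_eq_pow_sum, C_1, one_mul, smul_eq_C_mul, map_pow, map_neg, map_one]

theorem Dmulti_gaussian (s : Fin d →₀ ℕ) :
    Dmulti d s (fun y => Real.exp (-‖y‖ ^ 2 / 2)) =
      gaussianMul d ((-1 : ℝ) ^ s.degree • expLap d (monomial s 1)) := by
  have hG : (fun y : EuclideanSpace ℝ (Fin d) => Real.exp (-‖y‖ ^ 2 / 2)) =
      gaussianMul d (expLap d 1) := by
    funext y
    simp [gaussianMul, expLap_one, peval]
  rw [Dmulti, hG, List.foldr_iterate_of_semiconj semiconj_gaussianMul_gaussPderiv,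
    List.foldr_iterate_of_semiconj semiconj_expLap_gaussPderiv, foldr_iterate_neg_X_mul_one,
    map_smul]

theorem polyOp_gaussian {m : ℕ} {p : MvPolynomial (Fin d) ℝ} (hp : p.IsHomogeneous m) :
    polyOp d p (fun y => Real.exp (-‖y‖ ^ 2 / 2)) =
      gaussianMul d ((-1 : ℝ) ^ m • expLap d p) := by
  have hdeg (s) (hs : s ∈ p.support) : s.degree = m := by
    rw [Finsupp.degree_eq_weight_one]
    exact hp (mem_support_iff.mp hs)
  have hexp : expLap d p = ∑ s ∈ p.support, p.coeff s • expLap d (monomial s 1) := by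
    conv_lhs => rw [p.as_sum]
    simp only [map_sum, ← map_smul, smul_eq_mul, mul_one]
  funext x
  simp only [polyOp, Dmulti_gaussian, hexp, gaussianMul, peval, smul_eval, map_sum, smul_sum,
    mul_sum]
  refine sum_congr rfl fun s hs => ?_
  rw [hdeg s hs]
  ring

end Gaussian

theorem hobson_gaussian (d m : ℕ) (p : MvPolynomial (Fin d) ℝ)
    (hp : p.IsHomogeneous m) (x : EuclideanSpace ℝ (Fin d)) :
    polyOp d p (fun y => Real.exp (-‖y‖ ^ 2 / 2)) x =
      ∑ j ∈ range (m / 2 + 1),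
        ((-1 : ℝ) ^ (m - j) / (2 ^ j * (Nat.factorial j))) * Real.exp (-‖x‖ ^ 2 / 2) *
          peval d ((lapPoly d)^[j] p) x := by
  have hN : p.totalDegree < 2 * (m / 2 + 1) := by have := hp.totalDegree_le; omega
  rw [polyOp_gaussian hp, gaussianMul, expLap_eq_expLapTrunc hN, expLapTrunc_apply]
  simp only [peval, smul_eval, map_sum, mul_sum]
  refine sum_congr rfl fun j hj => ?_
  rw [← neg_one_pow_mul_heatCoeff (by simp at hj; omega)]
  ring
end
end
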